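/- Let z ∈ ℤ^d be a generating vector and n ≥ 1 a modulus, and let h_0,…,h_{n−1} ∈ ℤ^d be a family with h_ξ·z ≡ ξ (mod n) for each ξ, forming an anti-aliasing set A = {h_0,…,h_{n−1}} of cardinality n. Let v̂ : ℤ^d → ℂ be absolutely summable and set v(x) = Σ_{ℓ ∈ ℤ^d} v̂(ℓ) exp(2πi ℓ·x). Let û_a : A → ℂ be arbitrary coefficients and set u_a(x) = Σ_{h' ∈ A} û_a(h') exp(2πi h'·x). Then for every h ∈ A, the lattice-rule approximated Fourier coefficient of the product f = v·u_a satisfies (1/n) · Σ_{k=0}^{n−1} v(p_k) u_a(p_k) exp(−2πi h·p_k) = Σ_{h' ∈ A} w_{(h−h')·z mod n} · û_a(h'), where w_m := Σ_{ℓ ∈ ℤ^d, ℓ·z ≡ m (mod n)} v̂(ℓ); that is, multiplication by v acts on the coefficient vector (û_a(h_ξ))_ξ as the circulant matrix with entries W_{ξ,ξ'} = w_{(ξ−ξ') mod n}. -/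

import Mathlib

/-! At the lattice points `exp(2πi h·p_k) = ζ^(k (h·z))` with `ζ = exp(2πi/n)`, so by
orthogonality of the characters of `ZMod n` the lattice rule integrates `exp(2πi h·x)` exactly to
the indicator of `h·z ≡ 0 (mod n)`. The integrand `v · u_a · exp(−2πi h_ξ₀·x)` is an absolutely
convergent sum of exponentials with frequencies `ℓ + h_ξ' − h_ξ₀`, and the rule keeps exactly the
`ℓ` with `ℓ·z ≡ ξ₀ − ξ' (mod n)`: the aliasing class whose coefficients add up to `w_(ξ₀ − ξ')`. -/

noncomputable section

/-- Integer dot product on `ℤ^d`. -/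
def dotZ {d : ℕ} (h z : Fin d → ℤ) : ℤ := ∑ i, h i * z i

/-- The rank-1 lattice point `p_k = (k/n) z ∈ ℝ^d`. -/
def latPt1 {d : ℕ} (z : Fin d → ℤ) (n : ℕ) (k : Fin n) : Fin d → ℝ :=
  fun i => ((k : ℝ) / (n : ℝ)) * (z i : ℝ)

/-- The exponential `x ↦ exp(2πi h·x)`. -/
def eFun {d : ℕ} (h : Fin d → ℤ) (x : Fin d → ℝ) : ℂ :=
  Complex.exp (2 * Real.pi * Complex.I * ∑ i, (h i : ℂ) * (x i : ℂ))

open Finset ZMod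

variable {d : ℕ}

lemma dotZ_add (h h' z : Fin d → ℤ) : dotZ (h + h') z = dotZ h z + dotZ h' z :=
  add_dotProduct h h' z

lemma dotZ_sub (h h' z : Fin d → ℤ) : dotZ (h - h') z = dotZ h z - dotZ h' z :=
  sub_dotProduct h h' z

lemma eFun_add (h h' : Fin d → ℤ) (x : Fin d → ℝ) :
    eFun (h + h') x = eFun h x * eFun h' x := by
  simp only [eFun, ← Complex.exp_add, Pi.add_apply, Int.cast_add, add_mul, sum_add_distrib]
  ring_nf

lemma eFun_neg (h : Fin d → ℤ) (x : Fin d → ℝ) : eFun h (-x) = eFun (-h) x := by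
  simp [eFun]

lemma norm_eFun (h : Fin d → ℤ) (x : Fin d → ℝ) : ‖eFun h x‖ = 1 := by
  rw [eFun, show 2 * Real.pi * Complex.I * ∑ i, (h i : ℂ) * (x i : ℂ)
      = ((2 * Real.pi * ∑ i, (h i : ℝ) * x i : ℝ) : ℂ) * Complex.I by push_cast; ring]
  exact Complex.norm_exp_ofReal_mul_I _

lemma eFun_latPt1 (h z : Fin d → ℤ) {n : ℕ} [NeZero n] (k : Fin n) :
    eFun h (latPt1 z n k) = stdAddChar (((k : ℕ) : ZMod n) * (dotZ h z : ZMod n)) := by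
  rw [← Int.cast_natCast, ← Int.cast_mul, stdAddChar_coe, eFun, dotZ]
  congr 1
  simp only [latPt1]
  push_cast
  simp only [mul_sum, sum_div]
  exact sum_congr rfl fun i _ => by ring

lemma natCast_fin_bijective (n : ℕ) [NeZero n] :
    Function.Bijective fun k : Fin n => ((k : ℕ) : ZMod n) := by
  refine (Fintype.bijective_iff_injective_and_card _).mpr ⟨fun k k' hkk' => ?_, by simp⟩
  have := congrArg ZMod.val hkk'
  simp only [ZMod.val_cast_of_lt k.2, ZMod.val_cast_of_lt k'.2] at this
  exact Fin.ext this

lemma sum_fin_stdAddChar_mul {n : ℕ} [NeZero n] (a : ZMod n) :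
    ∑ k : Fin n, stdAddChar (((k : ℕ) : ZMod n) * a) = if a = 0 then (n : ℂ) else 0 := by
  rw [Fintype.sum_bijective _ (natCast_fin_bijective n) _ (fun x => stdAddChar (x * a))
      fun _ => rfl, AddChar.sum_mulShift a (isPrimitive_stdAddChar n), ZMod.card, Nat.cast_ite,
    Nat.cast_zero]

def latticeRule (z : Fin d → ℤ) (n : ℕ) (f : (Fin d → ℝ) → ℂ) : ℂ :=
  (1 / (n : ℂ)) * ∑ k : Fin n, f (latPt1 z n k)

lemma latticeRule_eFun (h z : Fin d → ℤ) (n : ℕ) [NeZero n] :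
    latticeRule z n (eFun h) = if (dotZ h z : ZMod n) = 0 then 1 else 0 := by
  have hn : (n : ℂ) ≠ 0 := NeZero.ne _
  simp only [latticeRule, eFun_latPt1, sum_fin_stdAddChar_mul]
  split_ifs <;> simp [hn]

lemma latticeRule_tsum_mul_eFun {c : (Fin d → ℤ) → ℂ} (hc : Summable fun ℓ => ‖c ℓ‖)
    (g z : Fin d → ℤ) (n : ℕ) [NeZero n] :
    latticeRule z n (fun x => (∑' ℓ, c ℓ * eFun ℓ x) * eFun g x)
      = ∑' ℓ : {ℓ // (dotZ ℓ z : ZMod n) = -(dotZ g z)}, c ℓ := by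
  have hsum : ∀ x, Summable fun ℓ => c ℓ * eFun (ℓ + g) x := fun x =>
    hc.of_norm_bounded fun ℓ => by rw [norm_mul, norm_eFun, mul_one]
  calc latticeRule z n (fun x => (∑' ℓ, c ℓ * eFun ℓ x) * eFun g x)
      = ∑' ℓ, c ℓ * latticeRule z n (eFun (ℓ + g)) := by
        simp only [latticeRule, ← tsum_mul_right, mul_assoc, ← eFun_add]
        rw [← Summable.tsum_finsetSum fun k _ => hsum _, ← tsum_mul_left]
        exact tsum_congr fun ℓ => by rw [← mul_sum, mul_left_comm]
    _ = ∑' ℓ, Set.indicator {ℓ | (dotZ ℓ z : ZMod n) = -(dotZ g z)} c ℓ := by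
        refine tsum_congr fun ℓ => ?_
        simp only [latticeRule_eFun, dotZ_add, Int.cast_add,
          add_eq_zero_iff_eq_neg, Set.indicator_apply, Set.mem_ofPred_eq]
        split_ifs <;> simp
    _ = _ := (_root_.tsum_subtype _ c).symm

/-- **Multiplication operator on rank-1 lattices.** With `h_0, …, h_{n−1}` an
anti-aliasing family (`h_ξ·z ≡ ξ (mod n)`), `v` with absolutely summable
Fourier coefficients `v̂`, and a trigonometric polynomial `u_a` supported on the
family, the lattice-rule approximated Fourier coefficient of `f = v·u_a` at
`h = h_{ξ₀}` is `Σ_{ξ'} w_{(ξ₀−ξ') mod n} û_a(ξ')`, where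
`w_m = Σ_{ℓ·z ≡ m (mod n)} v̂(ℓ)`; i.e. multiplication by `v` acts on the
coefficients as the circulant matrix `W_{ξ,ξ'} = w_{(ξ−ξ') mod n}`. -/
theorem rank1_multiplication_operator
    (d : ℕ) (z : Fin d → ℤ) (n : ℕ) (hn : 1 ≤ n)
    (hfam : Fin n → Fin d → ℤ)
    (hcong : ∀ ξ : Fin n, ((dotZ (hfam ξ) z : ZMod n)) = ((ξ : ℕ) : ZMod n))
    (vhat : (Fin d → ℤ) → ℂ) (hv : Summable fun ℓ : Fin d → ℤ => ‖vhat ℓ‖)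
    (v : (Fin d → ℝ) → ℂ) (hvdef : ∀ x, v x = ∑' ℓ : Fin d → ℤ, vhat ℓ * eFun ℓ x)
    (uahat : Fin n → ℂ)
    (ua : (Fin d → ℝ) → ℂ)
    (hua : ∀ x, ua x = ∑ ξ : Fin n, uahat ξ * eFun (hfam ξ) x)
    (w : ZMod n → ℂ)
    (hw : ∀ m : ZMod n,
      w m = ∑' ℓ : {ℓ : Fin d → ℤ // ((dotZ ℓ z : ZMod n)) = m}, vhat ℓ.1)
    (ξ₀ : Fin n) :
    (1 / (n : ℂ)) *
        ∑ k : Fin n, v (latPt1 z n k) * ua (latPt1 z n k) * eFun (hfam ξ₀) (-(latPt1 z n k))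
      = ∑ ξ' : Fin n, w (((ξ₀ : ℕ) : ZMod n) - ((ξ' : ℕ) : ZMod n)) * uahat ξ' := by
  have : NeZero n := ⟨by omega⟩
  have hexpand : ∀ x, v x * ua x * eFun (hfam ξ₀) (-x)
      = ∑ ξ', uahat ξ' * ((∑' ℓ, vhat ℓ * eFun ℓ x) * eFun (hfam ξ' - hfam ξ₀) x) := by
    intro x
    simp only [hvdef, hua, eFun_neg, sub_eq_add_neg, eFun_add, mul_sum, sum_mul]
    exact sum_congr rfl fun ξ' _ => by ring
  have hclass : ∀ ξ' : Fin n,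
      -(dotZ (hfam ξ' - hfam ξ₀) z : ZMod n) = ((ξ₀ : ℕ) : ZMod n) - ((ξ' : ℕ) : ZMod n) := by
    intro ξ'
    rw [dotZ_sub, Int.cast_sub, hcong, hcong, neg_sub]
  calc (1 / (n : ℂ)) *
        ∑ k : Fin n, v (latPt1 z n k) * ua (latPt1 z n k) * eFun (hfam ξ₀) (-(latPt1 z n k))
      = ∑ ξ', uahat ξ' *
          latticeRule z n (fun x => (∑' ℓ, vhat ℓ * eFun ℓ x) * eFun (hfam ξ' - hfam ξ₀) x) := by
        simp only [hexpand, latticeRule, mul_sum]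
        rw [sum_comm]
        exact sum_congr rfl fun ξ' _ => sum_congr rfl fun k _ => mul_left_comm _ _ _
    _ = _ := sum_congr rfl fun ξ' _ => by
        rw [latticeRule_tsum_mul_eFun hv, hclass, hw, mul_comm]
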